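/- Let n be a positive integer and let λ be a partition with at most 2n parts whose Young diagram can be tiled by dominoes, padded with zeros so that λ_1, …, λ_{2n} are defined. Then Σ_{i=1}^{2n} Σ_{j=1}^{2n} (−1)^{λ_i − λ_j + j − i}(λ_i − i) = 0. -/

import Mathlib

/-- A partition `λ`, 1-indexed: `λ_i = part i` for `i ≥ 1`. -/
structure OneIdxPartition where
  part : ℕ → ℕ
  part_zero : part 0 = 0
  antitone : ∀ ⦃i j : ℕ⦄, 1 ≤ i → i ≤ j → part j ≤ part i
  finite : ∃ N : ℕ, ∀ i : ℕ, N ≤ i → part i = 0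

/-- The conjugate partition: `λ'_j = #{i ≥ 1 : λ_i ≥ j}`. -/
noncomputable def conjFn (f : ℕ → ℕ) (j : ℕ) : ℕ :=
  Set.ncard {i : ℕ | 1 ≤ i ∧ j ≤ f i}

/-- The cells of the Young diagram of `λ`. -/
def cellsFn (f : ℕ → ℕ) : Set (ℕ × ℕ) :=
  {p : ℕ × ℕ | 1 ≤ p.1 ∧ 1 ≤ p.2 ∧ p.2 ≤ f p.1}

/-- The hook length of the cell `(i,j)`: `h(i,j) = (λ_i − j) + (λ'_j − i) + 1`. -/
noncomputable def hookFn (f : ℕ → ℕ) (i j : ℕ) : ℕ :=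
  (f i - j) + (conjFn f j - i) + 1

/-- `b(λ) = Σ_{(i,j)∈λ} (−1)^{λ_i + λ'_j − i − j + 1}(λ_i − i)`;
the exponent is replaced by `λ_i + λ'_j + i + j + 1`, which has the same parity. -/
noncomputable def bFn (f : ℕ → ℕ) : ℤ :=
  ∑ᶠ i : ℕ, ∑ j ∈ Finset.Icc 1 (f i),
    (-1 : ℤ) ^ (f i + conjFn f j + i + j + 1) * ((f i : ℤ) - (i : ℤ))

/-- The size `|λ| = Σ_i λ_i`. -/
noncomputable def sizeFn (f : ℕ → ℕ) : ℕ := ∑ᶠ i : ℕ, f i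

/-- A domino: a pair of horizontally or vertically adjacent cells. -/
def IsDomino (d : Set (ℕ × ℕ)) : Prop :=
  ∃ i j : ℕ, d = {(i, j), (i, j + 1)} ∨ d = {(i, j), (i + 1, j)}

/-- The Young diagram of `λ` can be tiled by dominoes. -/
def HasDominoTiling (f : ℕ → ℕ) : Prop :=
  ∃ D : Set (Set (ℕ × ℕ)), (∀ d ∈ D, IsDomino d) ∧
    D.PairwiseDisjoint id ∧ ⋃₀ D = cellsFn f

/-! The summand factors into a term in `i` times `(-1)^(λ_j + j)`, so it suffices that
`Σ_j (-1)^(λ_j + j) = 0`. Since `(-1)^m = 1 + 2 Σ_{k=1}^m (-1)^k`, this sum equals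
`Σ_{j=1}^{2n} (-1)^j = 0` plus twice the checkerboard balance `Σ_{(i,k) ∈ λ} (-1)^(i+k)` of the
diagram, which vanishes because every domino covers one black and one white cell. -/

open Finset

section Checkerboard

variable {R : Type*} [Ring R]

lemma IsDomino.finite {d : Set (ℕ × ℕ)} (hd : IsDomino d) : d.Finite := by
  obtain ⟨i, j, rfl | rfl⟩ := hd <;> exact (Set.finite_singleton _).insert _

lemma IsDomino.finsum_neg_one_pow_eq_zero {d : Set (ℕ × ℕ)} (hd : IsDomino d) :
    ∑ᶠ p ∈ d, (-1 : R) ^ (p.1 + p.2) = 0 := by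
  obtain ⟨i, j, rfl | rfl⟩ := hd <;> rw [finsum_mem_pair (by simp)]
  · simp [← add_assoc, pow_succ]
  · simp [add_right_comm i 1 j, pow_succ]

lemma HasDominoTiling.finsum_neg_one_pow_eq_zero {f : ℕ → ℕ} (ht : HasDominoTiling f)
    (hfin : (cellsFn f).Finite) : ∑ᶠ p ∈ cellsFn f, (-1 : R) ^ (p.1 + p.2) = 0 := by
  obtain ⟨D, hD, hdisj, hcover⟩ := ht
  rw [← hcover] at hfin ⊢
  have hDfin : D.Finite :=
    hfin.finite_subsets.subset fun d hd => Set.subset_sUnion_of_mem hd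
  rw [finsum_mem_sUnion hdisj hDfin fun d hd => (hD d hd).finite]
  exact finsum_mem_eq_zero_of_forall_eq_zero fun d hd => (hD d hd).finsum_neg_one_pow_eq_zero

lemma sum_Icc_neg_one_pow_two_mul (m : ℕ) : ∑ j ∈ Icc 1 (2 * m), (-1 : R) ^ j = 0 := by
  induction m with
  | zero => simp
  | succ m ih =>
    rw [mul_add, mul_one, sum_Icc_succ_top (by omega), sum_Icc_succ_top (by omega), ih]
    simp [pow_succ]

lemma neg_one_pow_eq_one_add_two_mul_sum_Icc (m : ℕ) :
    (-1 : R) ^ m = 1 + 2 * ∑ k ∈ Icc 1 m, (-1 : R) ^ k := by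
  induction m with
  | zero => simp
  | succ m ih =>
    rw [sum_Icc_succ_top (by omega), pow_succ, ih]
    noncomm_ring

end Checkerboard

lemma cellsFn_eq_coe_sigma {f : ℕ → ℕ} {N : ℕ} (hN : ∀ i, N < i → f i = 0) :
    cellsFn f = ↑(((Icc 1 N).sigma fun i => Icc 1 (f i)).map
      (Equiv.sigmaEquivProd ℕ ℕ).toEmbedding) := by
  ext ⟨i, j⟩
  simp only [cellsFn, Set.mem_ofPred_eq, coe_map, Equiv.coe_toEmbedding, Set.mem_image,
    mem_coe, mem_sigma, mem_Icc, Sigma.exists, Equiv.sigmaEquivProd_apply, Prod.mk.injEq]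
  constructor
  · rintro ⟨hi, hj, hji⟩
    refine ⟨i, j, ⟨⟨hi, ?_⟩, hj, hji⟩, rfl, rfl⟩
    by_contra h
    have := hN i (by omega)
    omega
  · rintro ⟨i, j, ⟨⟨hi, -⟩, hj, hji⟩, rfl, rfl⟩
    exact ⟨hi, hj, hji⟩

lemma HasDominoTiling.sum_Icc_neg_one_pow_add_self_eq_zero {R : Type*} [CommRing R]
    {f : ℕ → ℕ} {n : ℕ} (ht : HasDominoTiling f) (hf : ∀ i, 2 * n < i → f i = 0) :
    ∑ j ∈ Icc 1 (2 * n), (-1 : R) ^ (f j + j) = 0 := by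
  have hcells : ∑ i ∈ Icc 1 (2 * n), ∑ k ∈ Icc 1 (f i), (-1 : R) ^ (i + k) = 0 := by
    have hfin : (cellsFn f).Finite := cellsFn_eq_coe_sigma hf ▸ finite_toSet _
    have := ht.finsum_neg_one_pow_eq_zero (R := R) hfin
    rwa [cellsFn_eq_coe_sigma hf, finsum_mem_coe_finset, sum_map, sum_sigma] at this
  calc ∑ j ∈ Icc 1 (2 * n), (-1 : R) ^ (f j + j)
      = ∑ j ∈ Icc 1 (2 * n), ((-1 : R) ^ j + 2 * ∑ k ∈ Icc 1 (f j), (-1 : R) ^ (j + k)) := by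
        refine sum_congr rfl fun j _ => ?_
        simp only [pow_add _ j, ← mul_sum, add_comm (f j),
          neg_one_pow_eq_one_add_two_mul_sum_Icc (f j)]
        ring
    _ = ∑ j ∈ Icc 1 (2 * n), (-1 : R) ^ j
          + 2 * ∑ j ∈ Icc 1 (2 * n), ∑ k ∈ Icc 1 (f j), (-1 : R) ^ (j + k) := by
        rw [sum_add_distrib, mul_sum]
    _ = 0 := by rw [hcells, sum_Icc_neg_one_pow_two_mul, mul_zero, add_zero]

theorem full_alternating_sum_zero_general (n : ℕ) (μ : OneIdxPartition)
    (hlen : μ.part (2 * n + 1) = 0) (ht : HasDominoTiling μ.part) :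
    ∑ i ∈ Finset.Icc 1 (2 * n), ∑ j ∈ Finset.Icc 1 (2 * n),
        (-1 : ℤ) ^ (μ.part i + μ.part j + i + j) * ((μ.part i : ℤ) - (i : ℤ)) = 0 := by
  have hrows : ∀ i, 2 * n < i → μ.part i = 0 := fun i hi =>
    Nat.eq_zero_of_le_zero (hlen ▸ μ.antitone (by omega) hi)
  calc ∑ i ∈ Icc 1 (2 * n), ∑ j ∈ Icc 1 (2 * n),
        (-1 : ℤ) ^ (μ.part i + μ.part j + i + j) * ((μ.part i : ℤ) - i)
      = (∑ i ∈ Icc 1 (2 * n), (-1 : ℤ) ^ (μ.part i + i) * ((μ.part i : ℤ) - i))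
          * ∑ j ∈ Icc 1 (2 * n), (-1 : ℤ) ^ (μ.part j + j) := by
        rw [sum_mul_sum]
        refine sum_congr rfl fun i _ => sum_congr rfl fun j _ => ?_
        rw [add_right_comm _ _ i, add_assoc, pow_add]
        ring
    _ = 0 := by rw [ht.sum_Icc_neg_one_pow_add_self_eq_zero hrows, mul_zero]

/-- for `λ` with at most `2n` parts and empty 2-core,
`Σ_{i=1}^{2n} Σ_{j=1}^{2n} (−1)^{λ_i−λ_j+j−i}(λ_i−i) = 0`. -/
theorem full_alternating_sum_zero (n : ℕ) (hn : 0 < n) (μ : OneIdxPartition)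
    (hlen : μ.part (2 * n + 1) = 0) (ht : HasDominoTiling μ.part) :
    ∑ i ∈ Finset.Icc 1 (2 * n), ∑ j ∈ Finset.Icc 1 (2 * n),
        (-1 : ℤ) ^ (μ.part i + μ.part j + i + j) * ((μ.part i : ℤ) - (i : ℤ)) = 0 :=
  full_alternating_sum_zero_general n μ hlen ht
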